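/- Fix 0 < p ≤ 1 with q = 1−p, let n ≥ 1, and let A ⊆ C_{n+1} be a nonempty subset. Define A_0 = {x ∈ C_n : (x,0) ∈ A} and A_1 = {x ∈ C_n : (x,1) ∈ A}. For l ∈ {0,1}^n let (l,0) and (l,1) denote l appended by a last coordinate 0, respectively 1, and set Δ_0(A,p) = E d_{(l,0)}(x,A) and Δ_1(A,p) = E d_{(l,1)}(x,A), where x is uniform on C_{n+1} and l ∈ {0,1}^n has independent Bernoulli(p) coordinates. Then for each i ∈ {0,1} with A_i nonempty: Δ_0(A,p) ≤ Δ(A_i,p) and Δ_1(A,p) ≤ Δ(A_i,p) + 1/2; moreover, if both A_0 and A_1 are nonempty, Δ_1(A,p) ≤ (Δ(A_0,p) + Δ(A_1,p))/2. -/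
import Mathlib


/-- The randomized Hamming distance `d_l(x,y) = Σ_{i : x i ≠ y i} l i`, where the coordinates
with `l i = 1` are the ones that are counted. -/
def dl {ι : Type*} [Fintype ι] (l x y : ι → Bool) : ℕ :=
  (Finset.univ.filter fun i => x i ≠ y i ∧ l i = true).card

/-- The randomized Hamming distance from a point `x` to a subset `A`:
`d_l(x,A) = min_{y ∈ A} d_l(x,y)`. -/
noncomputable def dlToSet {ι : Type*} [Fintype ι] (l x : ι → Bool) (A : Set (ι → Bool)) : ℕ :=
  sInf ((fun y => dl l x y) '' A)

/-- The probability `p^{|l|}(1-p)^{n-|l|}` of the vector `l` of `n` independent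
Bernoulli(p) coordinates. -/
noncomputable def bernWeight {ι : Type*} [Fintype ι] (p : ℝ) (l : ι → Bool) : ℝ :=
  p ^ (Finset.univ.filter fun i => l i = true).card *
    (1 - p) ^ (Finset.univ.filter fun i => l i = false).card

/-- `Δ(A,p)`: the expectation of `d_l(x,A)` when `x` is uniform on the cube and `l` has
independent Bernoulli(p) coordinates. -/
noncomputable def avgDistP {ι : Type*} [Fintype ι] [DecidableEq ι] (p : ℝ)
    (A : Set (ι → Bool)) : ℝ :=
  ∑ l : ι → Bool, ∑ x : ι → Bool,
    (bernWeight p l / 2 ^ Fintype.card ι) * (dlToSet l x A : ℝ)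

section aux
variable {n : ℕ}

def snocEquiv (n : ℕ) : ((Fin n → Bool) × Bool) ≃ (Fin (n+1) → Bool) where
  toFun z := Fin.snoc z.1 z.2
  invFun f := (Fin.init f, f (Fin.last n))
  left_inv z := by simp [Fin.init_snoc]
  right_inv f := by simp [Fin.snoc_init_self]

lemma sum_snoc (g : (Fin (n+1) → Bool) → ℝ) :
    ∑ x : Fin (n+1) → Bool, g x = ∑ x' : Fin n → Bool, ∑ b : Bool, g (Fin.snoc x' b) := by
  rw [← (snocEquiv n).sum_comp g, Fintype.sum_prod_type]
  rfl

lemma dl_snoc (l x y : Fin n → Bool) (t b c : Bool) :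
    dl (Fin.snoc l t) (Fin.snoc x b) (Fin.snoc y c)
      = dl l x y + (if b ≠ c ∧ t = true then 1 else 0) := by
  simp only [dl, Finset.card_filter]
  rw [Fin.sum_univ_castSucc]
  simp [Fin.snoc_castSucc, Fin.snoc_last]

lemma card_snoc (l : Fin n → Bool) (t c : Bool) :
    (Finset.univ.filter fun i => (Fin.snoc l t : Fin (n+1) → Bool) i = c).card
      = (Finset.univ.filter fun i => l i = c).card + (if t = c then 1 else 0) := by
  simp only [Finset.card_filter]
  rw [Fin.sum_univ_castSucc]
  simp [Fin.snoc_castSucc, Fin.snoc_last]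

lemma bernWeight_snoc (p : ℝ) (l : Fin n → Bool) (t : Bool) :
    bernWeight p (Fin.snoc l t) = bernWeight p l * (if t then p else 1 - p) := by
  unfold bernWeight
  rw [card_snoc, card_snoc]
  cases t <;> simp [pow_succ] <;> ring

lemma sum_bernWeight (p : ℝ) : ∀ n : ℕ, ∑ l : Fin n → Bool, bernWeight p l = 1 := by
  intro n
  induction n with
  | zero => simp [bernWeight]
  | succ m ih =>
      have : ∑ l : Fin (m+1) → Bool, bernWeight p l
          = ∑ l' : Fin m → Bool, ∑ t : Bool, bernWeight p (Fin.snoc l' t) := by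
        rw [← (snocEquiv m).sum_comp (bernWeight p), Fintype.sum_prod_type]
        rfl
      rw [this, ← ih]
      apply Finset.sum_congr rfl
      intro l _
      rw [Fintype.sum_bool, bernWeight_snoc, bernWeight_snoc]
      norm_num
      ring

lemma bernWeight_nonneg {p : ℝ} (hp0 : 0 ≤ p) (hp1 : p ≤ 1) (l : Fin n → Bool) :
    0 ≤ bernWeight p l :=
  mul_nonneg (pow_nonneg hp0 _) (pow_nonneg (by linarith) _)

lemma dlToSet_snoc_le (A : Set (Fin (n+1) → Bool)) (Ac : Set (Fin n → Bool)) (c : Bool)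
    (hAc : ∀ z ∈ Ac, Fin.snoc z c ∈ A) (hne : Ac.Nonempty)
    (l x : Fin n → Bool) (t b : Bool) :
    dlToSet (Fin.snoc l t) (Fin.snoc x b) A
      ≤ dlToSet l x Ac + (if b ≠ c ∧ t = true then 1 else 0) := by
  have hne' : ((fun y => dl l x y) '' Ac).Nonempty := hne.image _
  obtain ⟨y, hy, hm⟩ := Nat.sInf_mem hne'
  have h2 : dlToSet (Fin.snoc l t) (Fin.snoc x b) A
      ≤ dl (Fin.snoc l t) (Fin.snoc x b) (Fin.snoc y c) :=
    Nat.sInf_le ⟨_, hAc y hy, rfl⟩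
  rw [dl_snoc] at h2
  have : dlToSet l x Ac = dl l x y := hm.symm
  omega

end aux

/-- Lemma 6.7, (6.7.3)-(6.7.5): identifying `C_{n+1} = C_n × {0,1}` (via `Fin.snoc`), for
nonempty `A ⊆ C_{n+1}` with slices `A₀, A₁ ⊆ C_n` and
`Δ_i(A,p) = E d_{(l,i)}(x,A)` (`x` uniform on `C_{n+1}`, `l` Bernoulli(p) in `{0,1}^n`):
for each `i ∈ {0,1}` with `A_i` nonempty, `Δ₀(A,p) ≤ Δ(A_i,p)` and
`Δ₁(A,p) ≤ Δ(A_i,p) + 1/2`; if both slices are nonempty,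
`Δ₁(A,p) ≤ (Δ(A₀,p) + Δ(A₁,p))/2`. -/
theorem stmt16 (p : ℝ) (hp0 : 0 < p) (hp1 : p ≤ 1) {n : ℕ} (hn : 1 ≤ n)
    (A : Set (Fin (n + 1) → Bool)) (hA : A.Nonempty)
    (A0 A1 : Set (Fin n → Bool))
    (hA0 : A0 = {x : Fin n → Bool | Fin.snoc x false ∈ A})
    (hA1 : A1 = {x : Fin n → Bool | Fin.snoc x true ∈ A})
    (Δ0 Δ1 : ℝ)
    (hΔ0 : Δ0 = ∑ l : Fin n → Bool, ∑ x : Fin (n + 1) → Bool,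
        (bernWeight p l / 2 ^ (n + 1)) * (dlToSet (Fin.snoc l false) x A : ℝ))
    (hΔ1 : Δ1 = ∑ l : Fin n → Bool, ∑ x : Fin (n + 1) → Bool,
        (bernWeight p l / 2 ^ (n + 1)) * (dlToSet (Fin.snoc l true) x A : ℝ)) :
    (A0.Nonempty → Δ0 ≤ avgDistP p A0 ∧ Δ1 ≤ avgDistP p A0 + 1 / 2) ∧
      (A1.Nonempty → Δ0 ≤ avgDistP p A1 ∧ Δ1 ≤ avgDistP p A1 + 1 / 2) ∧
      (A0.Nonempty → A1.Nonempty → Δ1 ≤ (avgDistP p A0 + avgDistP p A1) / 2) := by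
  have hw : ∀ l : Fin n → Bool, 0 ≤ bernWeight p l / 2 ^ (n+1) := fun l =>
    div_nonneg (bernWeight_nonneg hp0.le hp1 l) (by positivity)
  have hmem0 : ∀ z ∈ A0, Fin.snoc z false ∈ A := by intro z hz; rw [hA0] at hz; exact hz
  have hmem1 : ∀ z ∈ A1, Fin.snoc z true ∈ A := by intro z hz; rw [hA1] at hz; exact hz
  -- avgDistP over Fin n, rewritten:
  have havg : ∀ Ac : Set (Fin n → Bool), avgDistP p Ac
      = ∑ l : Fin n → Bool, ∑ x : Fin n → Bool,
          (bernWeight p l / 2 ^ n) * (dlToSet l x Ac : ℝ) := by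
    intro Ac; unfold avgDistP; rw [Fintype.card_fin]
  -- master lemma for claims 1,2
  have master : ∀ (Ac : Set (Fin n → Bool)) (c : Bool),
      (∀ z ∈ Ac, Fin.snoc z c ∈ A) → Ac.Nonempty → ∀ t : Bool,
      ∑ l : Fin n → Bool, ∑ x : Fin (n + 1) → Bool,
        (bernWeight p l / 2 ^ (n + 1)) * (dlToSet (Fin.snoc l t) x A : ℝ)
      ≤ avgDistP p Ac + (if t then 1/2 else 0) := by
    intro Ac c hmem hne t
    have key : ∀ l : Fin n → Bool,
        ∑ x : Fin (n + 1) → Bool,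
          (bernWeight p l / 2 ^ (n + 1)) * (dlToSet (Fin.snoc l t) x A : ℝ)
        ≤ ∑ x : Fin n → Bool, ((bernWeight p l / 2 ^ n) * (dlToSet l x Ac : ℝ)
            + (if t then bernWeight p l / 2 ^ (n+1) else 0)) := by
      intro l
      rw [sum_snoc]
      apply Finset.sum_le_sum
      intro x _
      have hb : ∀ b : Bool,
          (bernWeight p l / 2 ^ (n + 1)) * (dlToSet (Fin.snoc l t) (Fin.snoc x b) A : ℝ)
          ≤ (bernWeight p l / 2 ^ (n + 1)) *
              ((dlToSet l x Ac : ℝ) + (if b ≠ c ∧ t = true then 1 else 0)) := by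
        intro b
        apply mul_le_mul_of_nonneg_left _ (hw l)
        have := dlToSet_snoc_le A Ac c hmem hne l x t b
        push_cast
        split <;> push_cast at this ⊢ <;> simp_all <;> exact_mod_cast this
      calc ∑ b : Bool,
            (bernWeight p l / 2 ^ (n + 1)) * (dlToSet (Fin.snoc l t) (Fin.snoc x b) A : ℝ)
          ≤ ∑ b : Bool, (bernWeight p l / 2 ^ (n + 1)) *
              ((dlToSet l x Ac : ℝ) + (if b ≠ c ∧ t = true then 1 else 0)) :=
            Finset.sum_le_sum fun b _ => hb b
        _ = (bernWeight p l / 2 ^ n) * (dlToSet l x Ac : ℝ)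
            + (if t then bernWeight p l / 2 ^ (n+1) else 0) := by
            rw [Fintype.sum_bool]
            cases t <;> cases c <;> simp <;> ring
    calc _ ≤ ∑ l : Fin n → Bool, ∑ x : Fin n → Bool,
            ((bernWeight p l / 2 ^ n) * (dlToSet l x Ac : ℝ)
              + (if t then bernWeight p l / 2 ^ (n+1) else 0)) :=
          Finset.sum_le_sum fun l _ => key l
      _ = avgDistP p Ac + (if t then 1/2 else 0) := by
          rw [havg]
          simp only [Finset.sum_add_distrib]
          congr 1
          cases t
          · simp
          · have hcard : ((Fintype.card (Fin n → Bool) : ℕ) : ℝ) = 2 ^ n := by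
              simp [Fintype.card_fun]
            simp only [if_true, Finset.sum_const, Finset.card_univ, nsmul_eq_mul]
            have heach : ∀ l : Fin n → Bool,
                ((Fintype.card (Fin n → Bool) : ℕ) : ℝ) * (bernWeight p l / 2 ^ (n+1))
                  = bernWeight p l / 2 := by
              intro l
              have h2 : (2:ℝ)^n ≠ 0 := by positivity
              rw [hcard, pow_succ]
              field_simp
            rw [Finset.sum_congr rfl (fun l _ => heach l), ← Finset.sum_div,
              sum_bernWeight p n]
  refine ⟨?_, ?_, ?_⟩
  · intro h0
    constructor
    · have := master A0 false hmem0 h0 false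
      simpa [hΔ0] using this
    · have := master A0 false hmem0 h0 true
      simpa [hΔ1] using this
  · intro h1
    constructor
    · have := master A1 true hmem1 h1 false
      simpa [hΔ0] using this
    · have := master A1 true hmem1 h1 true
      simpa [hΔ1] using this
  · intro h0 h1
    rw [hΔ1]
    have key : ∀ l : Fin n → Bool,
        ∑ x : Fin (n + 1) → Bool,
          (bernWeight p l / 2 ^ (n + 1)) * (dlToSet (Fin.snoc l true) x A : ℝ)
        ≤ ∑ x : Fin n → Bool, ((bernWeight p l / 2 ^ (n+1)) * (dlToSet l x A0 : ℝ)
            + (bernWeight p l / 2 ^ (n+1)) * (dlToSet l x A1 : ℝ)) := by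
      intro l
      rw [sum_snoc]
      apply Finset.sum_le_sum
      intro x _
      rw [Fintype.sum_bool]
      have e0 : dlToSet (Fin.snoc l true) (Fin.snoc x false) A ≤ dlToSet l x A0 := by
        have := dlToSet_snoc_le A A0 false hmem0 h0 l x true false
        simpa using this
      have e1 : dlToSet (Fin.snoc l true) (Fin.snoc x true) A ≤ dlToSet l x A1 := by
        have := dlToSet_snoc_le A A1 true hmem1 h1 l x true true
        simpa using this
      have := add_le_add
        (mul_le_mul_of_nonneg_left (show (dlToSet (Fin.snoc l true) (Fin.snoc x true) A : ℝ)
          ≤ (dlToSet l x A1 : ℝ) by exact_mod_cast e1) (hw l))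
        (mul_le_mul_of_nonneg_left (show (dlToSet (Fin.snoc l true) (Fin.snoc x false) A : ℝ)
          ≤ (dlToSet l x A0 : ℝ) by exact_mod_cast e0) (hw l))
      linarith
    calc _ ≤ ∑ l : Fin n → Bool, ∑ x : Fin n → Bool,
            ((bernWeight p l / 2 ^ (n+1)) * (dlToSet l x A0 : ℝ)
              + (bernWeight p l / 2 ^ (n+1)) * (dlToSet l x A1 : ℝ)) :=
          Finset.sum_le_sum fun l _ => key l
      _ = (avgDistP p A0 + avgDistP p A1) / 2 := by
          have half : ∀ Ac : Set (Fin n → Bool),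
              ∑ l : Fin n → Bool, ∑ x : Fin n → Bool,
                bernWeight p l / 2 ^ (n+1) * (dlToSet l x Ac : ℝ)
                = avgDistP p Ac / 2 := by
            intro Ac
            rw [havg, Finset.sum_div]
            apply Finset.sum_congr rfl; intro l _
            rw [Finset.sum_div]
            apply Finset.sum_congr rfl; intro x _
            rw [pow_succ]; ring
          simp only [Finset.sum_add_distrib]
          rw [half, half, add_div]
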